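/- Let H be a real inner product space, let u, v ∈ H, and let τ, c, γ be positive reals with γ > τc². Then ‖τu‖² ≤ 2(1 + max{0, (2τc² − γ)/(γ − τc²)}) · (‖τu + (τc²/γ)v‖² + (τc²/γ)·((γ − τc²)/γ)·‖v‖²). -/

import Mathlib

lemma norm_sq_le_two_mul_norm_add_sq_add_norm_sq {E : Type*} [SeminormedAddCommGroup E]
    (a b : E) : ‖a‖ ^ 2 ≤ 2 * (‖a + b‖ ^ 2 + ‖b‖ ^ 2) := by
  have htri : ‖a‖ ≤ ‖a + b‖ + ‖b‖ := by
    simpa using norm_sub_le (a + b) b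
  calc ‖a‖ ^ 2 ≤ (‖a + b‖ + ‖b‖) ^ 2 := pow_le_pow_left₀ (norm_nonneg a) htri 2
    _ ≤ 2 * (‖a + b‖ ^ 2 + ‖b‖ ^ 2) := add_sq_le

lemma norm_sq_le_of_sq_le_mul {E : Type*} [SeminormedAddCommGroup E] [NormedSpace ℝ E]
    (a v : E) {s r K : ℝ} (hK : 1 ≤ K) (hs : s ^ 2 ≤ K * r) :
    ‖a‖ ^ 2 ≤ 2 * K * (‖a + s • v‖ ^ 2 + r * ‖v‖ ^ 2) := by
  have hsv : ‖s • v‖ ^ 2 = s ^ 2 * ‖v‖ ^ 2 := by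
    rw [norm_smul, mul_pow, Real.norm_eq_abs, sq_abs]
  have hfirst := mul_le_mul_of_nonneg_right hK (sq_nonneg ‖a + s • v‖)
  have hsecond := mul_le_mul_of_nonneg_right hs (sq_nonneg ‖v‖)
  calc ‖a‖ ^ 2 ≤ 2 * (‖a + s • v‖ ^ 2 + s ^ 2 * ‖v‖ ^ 2) := by
        simpa only [hsv] using norm_sq_le_two_mul_norm_add_sq_add_norm_sq a (s • v)
    _ ≤ 2 * K * (‖a + s • v‖ ^ 2 + r * ‖v‖ ^ 2) := by linarith

/-- The factor `1 + max 0 ((2t - γ)/(γ - t))` is `max 1 (t/(γ - t))`, and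
`t/(γ - t) · (t/γ)((γ - t)/γ) = (t/γ)²`. -/
lemma sq_div_le_one_add_max_mul {t γ : ℝ} (ht : 0 ≤ t) (htγ : t < γ) :
    (t / γ) ^ 2 ≤ (1 + max 0 ((2 * t - γ) / (γ - t))) * (t / γ * ((γ - t) / γ)) := by
  have hγ : 0 < γ := ht.trans_lt htγ
  have hgap : 0 < γ - t := sub_pos.mpr htγ
  have hratio : t / (γ - t) = 1 + (2 * t - γ) / (γ - t) := by
    field_simp
    ring
  calc (t / γ) ^ 2 = t / (γ - t) * (t / γ * ((γ - t) / γ)) := by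
        field_simp
    _ ≤ (1 + max 0 ((2 * t - γ) / (γ - t))) * (t / γ * ((γ - t) / γ)) := by
        rw [hratio]
        gcongr
        exact le_max_right _ _

theorem stmt_1_general {H : Type*} [NormedAddCommGroup H] [InnerProductSpace ℝ H]
    (u v : H) (τ c γ : ℝ) (hτ : 0 < τ)
    (h : τ * c ^ 2 < γ) :
    ‖τ • u‖ ^ 2 ≤
      2 * (1 + max 0 ((2 * τ * c ^ 2 - γ) / (γ - τ * c ^ 2))) *
        (‖τ • u + (τ * c ^ 2 / γ) • v‖ ^ 2 +
          (τ * c ^ 2 / γ) * ((γ - τ * c ^ 2) / γ) * ‖v‖ ^ 2) := by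
  have ht : 0 ≤ τ * c ^ 2 := by positivity
  rw [mul_assoc 2 τ]
  exact norm_sq_le_of_sq_le_mul _ _ (le_add_of_nonneg_right (le_max_left _ _))
    (sq_div_le_one_add_max_mul ht h)

theorem stmt_1 {H : Type*} [NormedAddCommGroup H] [InnerProductSpace ℝ H]
    (u v : H) (τ c γ : ℝ) (hτ : 0 < τ) (hc : 0 < c) (hγ : 0 < γ)
    (h : τ * c ^ 2 < γ) :
    ‖τ • u‖ ^ 2 ≤
      2 * (1 + max 0 ((2 * τ * c ^ 2 - γ) / (γ - τ * c ^ 2))) *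
        (‖τ • u + (τ * c ^ 2 / γ) • v‖ ^ 2 +
          (τ * c ^ 2 / γ) * ((γ - τ * c ^ 2) / γ) * ‖v‖ ^ 2) :=
  stmt_1_general u v τ c γ hτ h
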